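/- arXiv:1808.03197 — 4 statements merged into one kernel-verified Lean document; each statement's English description precedes it below -/
import Mathlib

section
/- For any nonnegative w ∈ ℝ^n with ‖w‖₁ = 1 and n ≥ 2, the Laakso–Taagepera index L(w) = 1/(Σᵢ w_i²) satisfies L(w) ≤ 1/(Δ² + (1−Δ)²/(n−1)), where Δ = maxᵢ w_i. -/
/-!
Split off a coordinate `w j`: the other `n - 1` coordinates sum to `1 - w j`, so by
Cauchy–Schwarz their squares sum to at least `(1 - w j)² / (n - 1)`. The resulting bound holds
for every coordinate, in particular for the largest one `Δ`.
-/

open Finset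

theorem sq_sum_div_card_le_sum_sq {ι : Type*} (s : Finset ι) (f : ι → ℝ) :
    (∑ i ∈ s, f i) ^ 2 / #s ≤ ∑ i ∈ s, f i ^ 2 :=
  div_le_of_le_mul₀ (Nat.cast_nonneg _) (sum_nonneg fun _ _ ↦ sq_nonneg _)
    (mul_comm (∑ i ∈ s, f i ^ 2) _ ▸ sq_sum_le_card_mul_sum_sq)

theorem sq_add_sq_one_sub_div_le_sum_sq {ι : Type*} [DecidableEq ι] {s : Finset ι}
    {f : ι → ℝ} (hf : ∑ i ∈ s, f i = 1) {j : ι} (hj : j ∈ s) :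
    f j ^ 2 + (1 - f j) ^ 2 / ((#s : ℝ) - 1) ≤ ∑ i ∈ s, f i ^ 2 := by
  have hrest : ∑ i ∈ s.erase j, f i = 1 - f j := by
    rw [← hf, ← add_sum_erase s f hj, add_sub_cancel_left]
  rw [← add_sum_erase s _ hj, ← hrest, ← cast_card_erase_of_mem hj]
  exact add_le_add_right (sq_sum_div_card_le_sum_sq _ f) _

theorem sq_add_one_sub_sq_div_pos {c : ℝ} (hc : 0 < c) (a : ℝ) :
    0 < a ^ 2 + (1 - a) ^ 2 / c := by
  rcases eq_or_ne a 0 with rfl | ha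
  · norm_num [hc]
  · exact add_pos_of_pos_of_nonneg (sq_pos_of_ne_zero ha) (by positivity)

theorem stmt6 (n : ℕ) (hn : 2 ≤ n) (w : Fin n → ℝ)
    (h1 : ∑ i, w i = 1)
    (Δ : ℝ) (hΔ : Δ = Finset.univ.sup' ⟨⟨0, by omega⟩, Finset.mem_univ _⟩ w) :
    1 / ∑ i, (w i) ^ 2 ≤ 1 / (Δ ^ 2 + (1 - Δ) ^ 2 / ((n : ℝ) - 1)) := by
  obtain ⟨j, -, hj⟩ := exists_mem_eq_sup' (⟨⟨0, by omega⟩, mem_univ _⟩ :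
    (univ : Finset (Fin n)).Nonempty) w
  have hn1 : (0 : ℝ) < n - 1 := by
    rw [sub_pos, Nat.one_lt_cast]
    omega
  rw [hΔ, hj]
  apply one_div_le_one_div_of_le (sq_add_one_sub_sq_div_pos hn1 _)
  simpa using sq_add_sq_one_sub_div_le_sum_sq h1 (mem_univ j)
end

section
/- For any nonnegative w ∈ ℝ^n with ‖w‖₁ = 1 and Δ = maxᵢ w_i > 0, letting α = 1/Δ − ⌊1/Δ⌋ ∈ [0,1), we have Σᵢ w_i² ≤ Δ·(1 − α(1−α)Δ), equivalently L(w) ≥ 1/(Δ(1 − α(1−α)Δ)). -/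
/-!
Put `t i = w i / Δ ∈ [0, 1]`, so that `∑ t i = 1 / Δ`, and let `φ x = fract x * (1 - fract x)`.
Adding a number `t ∈ [0, 1]` raises `φ` by at most `t * (1 - t)`, hence
`φ (1 / Δ) ≤ ∑ t i * (1 - t i) = (Δ - ∑ w i ^ 2) / Δ ^ 2`, and `φ (1 / Δ) = α * (1 - α)`.
-/

open Finset

variable {K : Type*} [Field K] [LinearOrder K] [IsStrictOrderedRing K] [FloorRing K]

theorem Int.fract_add_mul_one_sub_fract_add_le (s : K) {t : K} (ht₀ : 0 ≤ t) (ht₁ : t ≤ 1) :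
    Int.fract (s + t) * (1 - Int.fract (s + t)) ≤
      Int.fract s * (1 - Int.fract s) + t * (1 - t) := by
  have hβ₀ := Int.fract_nonneg s
  have hβ₁ := Int.fract_lt_one s
  have hs : s - Int.fract s = ⌊s⌋ := by rw [Int.self_sub_fract]
  -- the loss is `2 β t` without carry and `2 (1 - β) (1 - t)` with a carry, where `β = fract s`
  rcases lt_or_ge (Int.fract s + t) 1 with hc | hc
  · have h : Int.fract (s + t) = Int.fract s + t :=
      Int.fract_eq_iff.2 ⟨by linarith, hc, ⌊s⌋, by linear_combination hs⟩
    rw [h]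
    nlinarith
  · have h : Int.fract (s + t) = Int.fract s + t - 1 :=
      Int.fract_eq_iff.2 ⟨by linarith, by linarith, ⌊s⌋ + 1, by push_cast; linear_combination hs⟩
    rw [h]
    nlinarith

theorem Int.fract_sum_mul_one_sub_fract_sum_le {ι : Type*} (s : Finset ι) {t : ι → K}
    (ht : ∀ i ∈ s, t i ∈ Set.Icc 0 1) :
    Int.fract (∑ i ∈ s, t i) * (1 - Int.fract (∑ i ∈ s, t i)) ≤ ∑ i ∈ s, t i * (1 - t i) := by
  classical
  induction s using Finset.induction_on with
  | empty => simp
  | insert a s ha ih =>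
    obtain ⟨ha₀, ha₁⟩ := ht a (mem_insert_self a s)
    rw [sum_insert ha, sum_insert ha, add_comm (t a), add_comm (t a * _)]
    exact (Int.fract_add_mul_one_sub_fract_add_le _ ha₀ ha₁).trans
      (add_le_add_left (ih fun i hi ↦ ht i (mem_insert_of_mem hi)) _)

theorem sum_sq_le_of_le_of_sum_eq_one {ι : Type*} (s : Finset ι) {w : ι → K} {Δ : K}
    (hw : ∀ i ∈ s, 0 ≤ w i) (hwΔ : ∀ i ∈ s, w i ≤ Δ) (h1 : ∑ i ∈ s, w i = 1) (hΔ : 0 < Δ) :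
    ∑ i ∈ s, w i ^ 2 ≤ Δ * (1 - Int.fract (1 / Δ) * (1 - Int.fract (1 / Δ)) * Δ) := by
  have ht : ∀ i ∈ s, w i / Δ ∈ Set.Icc 0 1 := fun i hi ↦
    ⟨div_nonneg (hw i hi) hΔ.le, (div_le_one hΔ).2 (hwΔ i hi)⟩
  have hsum : ∑ i ∈ s, w i / Δ = 1 / Δ := by rw [← sum_div, h1]
  have hvar : ∑ i ∈ s, w i / Δ * (1 - w i / Δ) = (Δ - ∑ i ∈ s, w i ^ 2) / Δ ^ 2 :=
    calc ∑ i ∈ s, w i / Δ * (1 - w i / Δ) = ∑ i ∈ s, (Δ * w i - w i ^ 2) / Δ ^ 2 :=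
          sum_congr rfl fun i _ ↦ by field_simp
      _ = (Δ - ∑ i ∈ s, w i ^ 2) / Δ ^ 2 := by
          rw [← sum_div, sum_sub_distrib, ← mul_sum, h1, mul_one]
  have key := Int.fract_sum_mul_one_sub_fract_sum_le s ht
  rw [hsum, hvar, le_div_iff₀ (by positivity)] at key
  linarith

theorem stmt8 (n : ℕ) (hn : 0 < n) (w : Fin n → ℝ)
    (hw : ∀ i, 0 ≤ w i) (h1 : ∑ i, w i = 1)
    (Δ : ℝ) (hΔdef : Δ = Finset.univ.sup' ⟨⟨0, hn⟩, Finset.mem_univ _⟩ w)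
    (hΔ : 0 < Δ)
    (α : ℝ) (hα : α = 1 / Δ - (⌊1 / Δ⌋ : ℝ)) :
    ∑ i, (w i) ^ 2 ≤ Δ * (1 - α * (1 - α) * Δ) ∧
      1 / (Δ * (1 - α * (1 - α) * Δ)) ≤ 1 / ∑ i, (w i) ^ 2 := by
  have hα' : α = Int.fract (1 / Δ) := hα
  have hwΔ : ∀ i ∈ univ, w i ≤ Δ := fun i hi ↦ hΔdef ▸ le_sup' w hi
  have hbound := sum_sq_le_of_le_of_sum_eq_one univ (fun i _ ↦ hw i) hwΔ h1 hΔ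
  rw [← hα'] at hbound
  obtain ⟨i₀, -, hi₀⟩ := exists_mem_eq_sup' ⟨⟨0, hn⟩, mem_univ _⟩ w
  have hpos : 0 < ∑ i, w i ^ 2 :=
    calc 0 < Δ ^ 2 := by positivity
      _ = w i₀ ^ 2 := by rw [hΔdef, hi₀]
      _ ≤ ∑ i, w i ^ 2 := single_le_sum (fun i _ ↦ sq_nonneg (w i)) (mem_univ i₀)
  exact ⟨hbound, one_div_le_one_div_of_le hpos hbound⟩
end

section
/- For positive integers q, k, m with k ≤ q ≤ m, in the weighted voting game v = [q; k, 1, …, 1] with one player of weight k and m players of weight 1, the number of swings of the weight-k player equals Σ_{i=1}^{k} C(m, q−i), and the number of swings of each weight-1 player equals C(m−1, q−1) + C(m−1, q−k−1). -/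
/-!
A coalition of the weight-one players has weight equal to its size, and adding the heavy player
adds `k`. So every swing condition is a condition on the size of a coalition, and the swings are
counted by binomial coefficients: the heavy player swings exactly the coalitions of weight-one
players of size `q - i` with `1 ≤ i ≤ k`; a light player swings the coalitions of weight `q - 1`,
which either omit the heavy player (size `q - 1`) or contain it (size `q - k - 1` of the others).
-/

/-- Number of `i`-swings in the weighted game with quota `q`, weight function `w`,
and player set `P`: coalitions `S ⊆ P \ {i}` that are losing but become winning with `i`. -/
def swingCount (q : ℕ) (w : ℕ → ℕ) (P : Finset ℕ) (i : ℕ) : ℕ :=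
  (((P.erase i).powerset).filter
    (fun S => (∑ j ∈ S, w j) < q ∧ q ≤ (∑ j ∈ S, w j) + w i)).card

open Finset

section CountingBySize

variable {α : Type*}

lemma card_filter_powerset_card_mem (T : Finset α) (I : Finset ℕ) :
    #{S ∈ T.powerset | #S ∈ I} = ∑ n ∈ I, (#T).choose n := by
  rw [card_eq_sum_card_fiberwise (s := {S ∈ T.powerset | #S ∈ I}) (f := card) (t := I)
    fun S hS => (mem_filter.1 hS).2]
  refine sum_congr rfl fun n hn => ?_
  rw [filter_filter, ← card_powersetCard, powersetCard_eq_filter]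
  congr 1
  exact filter_congr fun S _ => ⟨And.right, fun h => ⟨h ▸ hn, h⟩⟩

lemma card_filter_powerset_card_add_eq (T : Finset α) (a b : ℕ) :
    #{S ∈ T.powerset | #S + a = b} = if a ≤ b then (#T).choose (b - a) else 0 := by
  split_ifs with hab
  · rw [← card_powersetCard, powersetCard_eq_filter]
    congr 1
    exact filter_congr fun S _ => by omega
  · rw [card_eq_zero, filter_eq_empty_iff]
    intro S _
    omega

lemma card_filter_powerset_insert [DecidableEq α] {a : α} {s : Finset α} (ha : a ∉ s)
    (p : Finset α → Prop) [DecidablePred p] :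
    #{S ∈ (insert a s).powerset | p S} =
      #{S ∈ s.powerset | p S} + #{S ∈ s.powerset | p (insert a S)} := by
  simp only [card_filter, sum_powerset_insert ha]

end CountingBySize

section HeavyPlayerGame

variable {k : ℕ} {S : Finset ℕ}

lemma sum_ite_zero_eq_card_of_notMem (hS : 0 ∉ S) :
    ∑ j ∈ S, (if j = 0 then k else 1) = #S := by
  rw [sum_ite_of_false fun j hj => ne_of_mem_of_not_mem hj hS, sum_const, smul_eq_mul, mul_one]

lemma sum_ite_zero_insert_zero_eq_card_add (hS : 0 ∉ S) :
    ∑ j ∈ insert 0 S, (if j = 0 then k else 1) = #S + k := by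
  rw [sum_insert hS, if_pos rfl, sum_ite_zero_eq_card_of_notMem hS, add_comm]

lemma swingCount_heavy (q : ℕ) (hkq : k ≤ q) (P : Finset ℕ) :
    swingCount q (fun i => if i = 0 then k else 1) P 0 =
      ∑ i ∈ Icc 1 k, (#(P.erase 0)).choose (q - i) := by
  have hswing : ∀ S ∈ (P.erase 0).powerset,
      ((∑ j ∈ S, (if j = 0 then k else 1)) < q ∧ q ≤ (∑ j ∈ S, (if j = 0 then k else 1)) + k) ↔
        #S ∈ (Icc 1 k).image (q - ·) := by
    intro S hS
    rw [sum_ite_zero_eq_card_of_notMem fun h0 => notMem_erase 0 P (mem_powerset.1 hS h0)]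
    simp only [mem_image, mem_Icc]
    constructor
    · exact fun h => ⟨q - #S, by omega, by omega⟩
    · rintro ⟨i, hi, hiS⟩
      omega
  rw [swingCount, if_pos rfl, filter_congr hswing, card_filter_powerset_card_mem, sum_image]
  intro i hi j hj hij
  simp only [coe_Icc, Set.mem_Icc] at hi hj hij
  omega

lemma swingCount_light (q : ℕ) (hq : 0 < q) {P : Finset ℕ} (h0 : 0 ∈ P) {i : ℕ} (hi : i ≠ 0) :
    swingCount q (fun i => if i = 0 then k else 1) P i =
      (#((P.erase i).erase 0)).choose (q - 1) +
        (if k + 1 ≤ q then (#((P.erase i).erase 0)).choose (q - k - 1) else 0) := by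
  set U := (P.erase i).erase 0
  have h0U : 0 ∉ U := notMem_erase 0 _
  have hsub : ∀ S ∈ U.powerset, 0 ∉ S := fun S hS h => h0U (mem_powerset.1 hS h)
  have hwithout : #{S ∈ U.powerset | (∑ j ∈ S, (if j = 0 then k else 1)) < q ∧
      q ≤ (∑ j ∈ S, (if j = 0 then k else 1)) + 1} = #{S ∈ U.powerset | #S + 1 = q} := by
    congr 1
    refine filter_congr fun S hS => ?_
    rw [sum_ite_zero_eq_card_of_notMem (hsub S hS)]
    omega
  have hwith : #{S ∈ U.powerset | (∑ j ∈ insert 0 S, (if j = 0 then k else 1)) < q ∧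
      q ≤ (∑ j ∈ insert 0 S, (if j = 0 then k else 1)) + 1} =
        #{S ∈ U.powerset | #S + (k + 1) = q} := by
    congr 1
    refine filter_congr fun S hS => ?_
    rw [sum_ite_zero_insert_zero_eq_card_add (hsub S hS)]
    omega
  rw [swingCount, if_neg hi, ← insert_erase (mem_erase.2 ⟨hi.symm, h0⟩),
    card_filter_powerset_insert h0U, hwithout, hwith, card_filter_powerset_card_add_eq,
    card_filter_powerset_card_add_eq, if_pos (Nat.one_le_of_lt hq), Nat.sub_sub]

end HeavyPlayerGame

theorem stmt12_general (q k m : ℕ) (hk : 0 < k) (hkq : k ≤ q)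
    (w : ℕ → ℕ) (hw : w = fun i => if i = 0 then k else 1) :
    swingCount q w (Finset.range (m + 1)) 0 =
      ∑ i ∈ Finset.Icc 1 k, m.choose (q - i) ∧
    ∀ i ∈ Finset.range (m + 1), i ≠ 0 →
      swingCount q w (Finset.range (m + 1)) i =
        (m - 1).choose (q - 1) +
          (if k + 1 ≤ q then (m - 1).choose (q - k - 1) else 0) := by
  subst hw
  have h0 : 0 ∈ range (m + 1) := mem_range.2 m.succ_pos
  refine ⟨?_, fun i hi hi0 => ?_⟩
  · rw [swingCount_heavy q hkq, card_erase_of_mem h0, card_range, Nat.add_sub_cancel]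
  · have hU : #(((range (m + 1)).erase i).erase 0) = m - 1 := by
      rw [card_erase_of_mem (mem_erase.2 ⟨Ne.symm hi0, h0⟩), card_erase_of_mem hi, card_range,
        Nat.add_sub_cancel]
    rw [swingCount_light q (hk.trans_le hkq) h0 hi0, hU]

theorem stmt12 (q k m : ℕ) (hk : 0 < k) (hkq : k ≤ q) (hqm : q ≤ m)
    (w : ℕ → ℕ) (hw : w = fun i => if i = 0 then k else 1) :
    swingCount q w (Finset.range (m + 1)) 0 =
      ∑ i ∈ Finset.Icc 1 k, m.choose (q - i) ∧
    ∀ i ∈ Finset.range (m + 1), i ≠ 0 →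
      swingCount q w (Finset.range (m + 1)) i =
        (m - 1).choose (q - 1) +
          (if k + 1 ≤ q then (m - 1).choose (q - k - 1) else 0) :=
  stmt12_general q k m hk hkq w hw
end

section
/- In the weighted game v_n = [n³+n²; 2n², 1, …, 1] with 2n³ players of weight 1, for n ≥ 11 the Penrose–Banzhaf index of player 1 satisfies BZI₁(v_n) ≥ 1 − 2n³/2.6^n, where BZI₁(v_n) = η₁(v_n)/(η₁(v_n) + 2n³·η₂(v_n)), η₁(v_n) = Σ_{i=1}^{2n²} C(2n³, n³+n²−i), and η₂(v_n) = C(2n³, n³+n²). -/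
/-!
With `N = n³` and `k = n²`, the term `i = k` of `η₁` is the central binomial coefficient
`C(2N, N)`, so it suffices that `2.6ⁿ · C(2N, N + k) ≤ C(2N, N)`. Passing from `C(2N, N + j)` to
`C(2N, N + j + 1)` multiplies by `(N - j)/(N + j + 1) ≤ (N/(N + 1))^(2j + 1) ≤ exp(-(2j + 1)/(N + 1))`,
and the odd exponents add up to `k²`; hence `C(2N, N + k) ≤ C(2N, N) · exp(-n · n³/(n³ + 1))`,
while `n³/(n³ + 1) ≥ 1331/1332` gives `exp(n³/(n³ + 1)) ≥ e · 1331/1332 > 2.6`.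
-/

open Finset Real

lemma sub_div_add_le_div_pow {x : ℝ} {j : ℕ} (hj : (j : ℝ) ≤ x) :
    (x - j) / (x + j + 1) ≤ (x / (x + 1)) ^ (2 * j + 1) := by
  induction j with
  | zero => simp
  | succ j ih =>
    push_cast at hj ⊢
    have hj0 : (0 : ℝ) ≤ j := j.cast_nonneg
    have hgap : 0 < (x + 1) ^ 2 - (j + 1) ^ 2 := by nlinarith
    have hsplit : (x - (j + 1)) / (x + (j + 1) + 1)
        = (x - j) / (x + j + 1) * ((x ^ 2 - (j + 1) ^ 2) / ((x + 1) ^ 2 - (j + 1) ^ 2)) := by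
      rw [div_mul_div_comm, div_eq_div_iff (by linarith) (mul_pos (by linarith) hgap).ne']
      ring
    have hstep : (x ^ 2 - (j + 1) ^ 2) / ((x + 1) ^ 2 - (j + 1) ^ 2) ≤ (x / (x + 1)) ^ 2 := by
      rw [div_pow, div_le_div_iff₀ hgap (by nlinarith)]
      nlinarith [sq_nonneg ((j + 1) * x)]
    rw [hsplit, show 2 * (j + 1) + 1 = (2 * j + 1) + 2 by ring, pow_add]
    exact mul_le_mul (ih (by linarith)) hstep (div_nonneg (by nlinarith) hgap.le)
      (pow_nonneg (div_nonneg (by linarith) (by linarith)) _)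

lemma div_add_one_pow_le_exp {x : ℝ} (hx : 0 ≤ x) (m : ℕ) :
    (x / (x + 1)) ^ m ≤ exp (-m / (x + 1)) := by
  have hr : x / (x + 1) = 1 - 1 / (x + 1) := by field_simp; ring
  calc (x / (x + 1)) ^ m ≤ exp (-(1 / (x + 1))) ^ m := by
        rw [hr]
        gcongr
        · rw [← hr]; positivity
        · exact one_sub_le_exp_neg _
    _ = exp (-m / (x + 1)) := by rw [← exp_nat_mul]; congr 1; ring

lemma cast_choose_succ_right {n k : ℕ} (hk : k ≤ n) :
    (n.choose (k + 1) : ℝ) = n.choose k * ((n - k) / (k + 1)) := by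
  rw [mul_div_assoc', eq_div_iff (by positivity), ← Nat.cast_sub hk]
  exact_mod_cast Nat.choose_succ_right_eq n k

lemma choose_add_le_choose_mul_exp {N k : ℕ} (hk : k ≤ N) :
    ((2 * N).choose (N + k) : ℝ) ≤ (2 * N).choose N * exp (-(k : ℝ) ^ 2 / (N + 1)) := by
  induction k with
  | zero => simp
  | succ k ih =>
    have hkN : (k : ℝ) + 1 ≤ N := by exact_mod_cast hk
    have hfactor : ((N : ℝ) - k) / (N + k + 1) ≤ exp (-(2 * k + 1 : ℕ) / (N + 1)) :=
      (sub_div_add_le_div_pow (by linarith)).trans (div_add_one_pow_le_exp N.cast_nonneg _)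
    calc ((2 * N).choose (N + (k + 1)) : ℝ)
        = (2 * N).choose (N + k) * ((N - k) / (N + k + 1)) := by
          rw [← add_assoc, cast_choose_succ_right (by omega)]
          push_cast
          ring_nf
      _ ≤ (2 * N).choose N * exp (-(k : ℝ) ^ 2 / (N + 1)) * exp (-(2 * k + 1 : ℕ) / (N + 1)) :=
          mul_le_mul (ih (by omega)) hfactor (div_nonneg (by linarith) (by positivity))
            (by positivity)
      _ = (2 * N).choose N * exp (-((k + 1 : ℕ) : ℝ) ^ 2 / (N + 1)) := by
          rw [mul_assoc, ← exp_add]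
          push_cast
          ring_nf

lemma two_point_six_le_exp_div {m : ℝ} (hm : 1331 ≤ m) : (2.6 : ℝ) ≤ exp (m / (m + 1)) := by
  have hsplit : m / (m + 1) = 1 + -(1 / (m + 1)) := by field_simp; ring
  have hinv : 1 / (m + 1) ≤ 1 / 1332 := by gcongr; linarith
  rw [hsplit, exp_add]
  nlinarith [exp_one_gt_d9, one_sub_le_exp_neg (1 / (m + 1)), exp_pos 1]

lemma one_sub_div_le_div_add_mul {a b c p : ℝ} (ha : 0 < a) (hb : 0 ≤ b) (hc : 0 ≤ c)
    (hp : 0 < p) (hpc : p * c ≤ a) : 1 - b / p ≤ a / (a + b * c) := by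
  have hd : 0 < a + b * c := by positivity
  have hcompl : 1 - a / (a + b * c) = b * c / (a + b * c) := by field_simp; ring
  have : b * c / (a + b * c) ≤ b / p := by
    rw [div_le_div_iff₀ hd hp]
    nlinarith [mul_le_mul_of_nonneg_left hpc hb, mul_nonneg hb (mul_nonneg hb hc)]
  linarith

lemma two_point_six_pow_mul_choose_le {n : ℕ} (hn : 11 ≤ n) :
    (2.6 : ℝ) ^ n * (2 * n ^ 3).choose (n ^ 3 + n ^ 2) ≤ (2 * n ^ 3).choose (n ^ 3) := by
  have hN : (1331 : ℝ) ≤ (n : ℝ) ^ 3 := by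
    have : (11 : ℝ) ≤ n := by exact_mod_cast hn
    nlinarith [pow_le_pow_left₀ (by norm_num) this 3]
  have hpow : (2.6 : ℝ) ^ n ≤ exp ((n : ℝ) ^ 4 / ((n : ℝ) ^ 3 + 1)) :=
    calc (2.6 : ℝ) ^ n ≤ exp ((n : ℝ) ^ 3 / ((n : ℝ) ^ 3 + 1)) ^ n :=
          pow_le_pow_left₀ (by norm_num) (two_point_six_le_exp_div hN) n
      _ = exp ((n : ℝ) ^ 4 / ((n : ℝ) ^ 3 + 1)) := by rw [← exp_nat_mul]; ring_nf
  have hchoose := choose_add_le_choose_mul_exp (N := n ^ 3) (k := n ^ 2)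
    (Nat.pow_le_pow_right (by omega) (by omega))
  push_cast at hchoose
  calc (2.6 : ℝ) ^ n * (2 * n ^ 3).choose (n ^ 3 + n ^ 2)
      ≤ exp ((n : ℝ) ^ 4 / ((n : ℝ) ^ 3 + 1))
          * ((2 * n ^ 3).choose (n ^ 3) * exp (-((n : ℝ) ^ 2) ^ 2 / ((n : ℝ) ^ 3 + 1))) :=
        mul_le_mul hpow hchoose (by positivity) (by positivity)
    _ = (2 * n ^ 3).choose (n ^ 3) := by
        rw [mul_left_comm, ← exp_add]
        ring_nf
        simp

theorem stmt14 (n : ℕ) (hn : 11 ≤ n) (η₁ η₂ : ℕ)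
    (h1 : η₁ = ∑ i ∈ Finset.Icc 1 (2 * n ^ 2), (2 * n ^ 3).choose (n ^ 3 + n ^ 2 - i))
    (h2 : η₂ = (2 * n ^ 3).choose (n ^ 3 + n ^ 2)) :
    1 - 2 * (n : ℝ) ^ 3 / (2.6 : ℝ) ^ n ≤
      (η₁ : ℝ) / ((η₁ : ℝ) + 2 * (n : ℝ) ^ 3 * (η₂ : ℝ)) := by
  have hcentral : (2 * n ^ 3).choose (n ^ 3) ≤ η₁ := by
    have hmem : n ^ 2 ∈ Icc 1 (2 * n ^ 2) := mem_Icc.2 ⟨Nat.one_le_pow _ _ (by omega), by omega⟩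
    calc (2 * n ^ 3).choose (n ^ 3) = (2 * n ^ 3).choose (n ^ 3 + n ^ 2 - n ^ 2) := by
          rw [Nat.add_sub_cancel]
      _ ≤ η₁ := h1 ▸ single_le_sum (f := fun i => (2 * n ^ 3).choose (n ^ 3 + n ^ 2 - i))
          (fun _ _ => Nat.zero_le _) hmem
  have hη₁ : 0 < η₁ := (Nat.choose_pos (by omega)).trans_le hcentral
  refine one_sub_div_le_div_add_mul (by exact_mod_cast hη₁) (by positivity) η₂.cast_nonneg
    (by positivity) ?_
  calc (2.6 : ℝ) ^ n * η₂ ≤ (2 * n ^ 3).choose (n ^ 3) := h2 ▸ two_point_six_pow_mul_choose_le hn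
    _ ≤ η₁ := by exact_mod_cast hcentral
end
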